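/- Let γ(t) = (β(t), α(t)) be a curve in the upper half-plane with β(t) → −∞ and α(t)²/β(t)² → c_γ, and fix s > 0. Let E, F ∈ ℝ⁴ with ch₀(E) = ch₀(F) = 0, ch₂(E) ≠ 0, and suppose F has ch₀(F) = ch₁(F) = 0, ch₂(F) ≠ 0 (F a torsion subsheaf class of dimension ≤ 1 with ch₂ ≠ 0, E of dimension 2, i.e., ch₁(E) ≠ 0). Then lim_{t→∞} (1/(−β(t)))·(λ_{γ(t),s}(E) − λ_{γ(t),s}(F)) = −((s + 1/6)c_γ + 1/2) < 0. In particular, for t large, λ_{γ(t),s}(F) > λ_{γ(t),s}(E), so any such subobject F destabilizes E asymptotically. -/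

import Mathlib

/-!
Dividing `λ(E)` by `-β` and multiplying numerator and denominator by `β⁻²` turns it into a rational
function of `β⁻¹ → 0` and `α²/β² → c_γ` whose value at the limit is `1/2 - (s + 1/6) c_γ`, because
`ch₃^β(E)` contributes `β²ch₁(E)/2` while `Im Z(E)` is only linear in `β`. For the torsion class,
`λ(F)/(-β) = 1 - ch₃(F)β⁻¹/ch₂(F) → 1`.
-/

open Filter Topology

namespace TiltStability

/-- `λ_{β,α,s}` of a class with `ch₀ = 0` and `(ch₁, ch₂, ch₃) = (e₁, e₂, e₃)`. -/
noncomputable def slopeDimTwo (s e₁ e₂ e₃ β α : ℝ) : ℝ :=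
  ((e₃ - β * e₂ + (1/2) * β ^ 2 * e₁) - (s + 1/6) * α ^ 2 * e₁) / (e₂ - β * e₁)

/-- `λ_{β,α,s}` of a class with `ch₀ = ch₁ = 0` and `(ch₂, ch₃) = (f₂, f₃)`. -/
noncomputable def slopeDimOne (f₂ f₃ β : ℝ) : ℝ :=
  (f₃ - β * f₂) / f₂

theorem slopeDimTwo_div_neg (s e₁ e₂ e₃ α : ℝ) {β : ℝ} (hβ : β ≠ 0) :
    slopeDimTwo s e₁ e₂ e₃ β α / -β =
      (e₃ * β⁻¹ ^ 2 - e₂ * β⁻¹ + (1/2) * e₁ - (s + 1/6) * (α ^ 2 / β ^ 2) * e₁) /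
        (e₁ - e₂ * β⁻¹) := by
  have hβ2 : β ^ 2 ≠ 0 := pow_ne_zero 2 hβ
  rw [slopeDimTwo, div_div, ← div_div_div_cancel_right₀ hβ2]
  congr 1
  · field_simp
  · field_simp
    ring

theorem slopeDimOne_div_neg (f₃ : ℝ) {f₂ β : ℝ} (hf₂ : f₂ ≠ 0) (hβ : β ≠ 0) :
    slopeDimOne f₂ f₃ β / -β = 1 - f₃ * β⁻¹ / f₂ := by
  rw [slopeDimOne]
  field_simp
  ring

variable {ι : Type*} {l : Filter ι} {β α : ι → ℝ}

theorem tendsto_slopeDimTwo_div_neg (s e₂ e₃ : ℝ) {e₁ c : ℝ} (he₁ : e₁ ≠ 0)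
    (hβ : Tendsto β l atBot) (hc : Tendsto (fun t => α t ^ 2 / β t ^ 2) l (𝓝 c)) :
    Tendsto (fun t => slopeDimTwo s e₁ e₂ e₃ (β t) (α t) / -β t) l
      (𝓝 (1/2 - (s + 1/6) * c)) := by
  have hx : Tendsto (fun t => (β t)⁻¹) l (𝓝 0) := tendsto_inv_atBot_zero.comp hβ
  have hlim : Tendsto (fun t =>
      (e₃ * (β t)⁻¹ ^ 2 - e₂ * (β t)⁻¹ + (1/2) * e₁ - (s + 1/6) * (α t ^ 2 / β t ^ 2) * e₁) /
        (e₁ - e₂ * (β t)⁻¹)) l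
      (𝓝 ((e₃ * 0 ^ 2 - e₂ * 0 + (1/2) * e₁ - (s + 1/6) * c * e₁) / (e₁ - e₂ * 0))) := by
    refine Tendsto.div ?_ (tendsto_const_nhds.sub (tendsto_const_nhds.mul hx)) (by simpa using he₁)
    exact (((tendsto_const_nhds.mul (hx.pow 2)).sub (tendsto_const_nhds.mul hx)).add_const _).sub
      ((tendsto_const_nhds.mul hc).mul_const _)
  have hval : (e₃ * 0 ^ 2 - e₂ * 0 + (1/2) * e₁ - (s + 1/6) * c * e₁) / (e₁ - e₂ * 0) =
      1/2 - (s + 1/6) * c := by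
    simp only [zero_pow two_ne_zero, mul_zero, sub_zero]
    field_simp
    ring
  rw [hval] at hlim
  refine hlim.congr' ?_
  filter_upwards [hβ.eventually_lt_atBot 0] with t ht
  exact (slopeDimTwo_div_neg s e₁ e₂ e₃ (α t) ht.ne).symm

theorem tendsto_slopeDimOne_div_neg (f₃ : ℝ) {f₂ : ℝ} (hf₂ : f₂ ≠ 0) (hβ : Tendsto β l atBot) :
    Tendsto (fun t => slopeDimOne f₂ f₃ (β t) / -β t) l (𝓝 1) := by
  have hx : Tendsto (fun t => (β t)⁻¹) l (𝓝 0) := tendsto_inv_atBot_zero.comp hβ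
  have hlim : Tendsto (fun t => 1 - f₃ * (β t)⁻¹ / f₂) l (𝓝 (1 - f₃ * 0 / f₂)) :=
    tendsto_const_nhds.sub ((tendsto_const_nhds.mul hx).div_const _)
  rw [mul_zero, zero_div, sub_zero] at hlim
  refine hlim.congr' ?_
  filter_upwards [hβ.eventually_lt_atBot 0] with t ht
  exact (slopeDimOne_div_neg f₃ hf₂ ht.ne).symm

end TiltStability

open TiltStability

theorem torsion_subobject_destabilizes_at_minus_infty_general
    (β α : ℝ → ℝ) (cγ s : ℝ) (hs : 0 < s)
    (hβ : Tendsto β atTop atBot)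
    (hc : Tendsto (fun t => (α t) ^ 2 / (β t) ^ 2) atTop (nhds cγ))
    (hcγ : 0 ≤ cγ)
    (e₁ e₂ e₃ f₂ f₃ : ℝ) (he₁ : e₁ ≠ 0) (hf₂ : f₂ ≠ 0)
    (lamE lamF : ℝ → ℝ)
    (hlamE : ∀ t, lamE t =
      ((e₃ - β t * e₂ + (1/2) * (β t) ^ 2 * e₁) - (s + 1/6) * (α t) ^ 2 * e₁) /
        (e₂ - β t * e₁))
    (hlamF : ∀ t, lamF t = (f₃ - β t * f₂) / f₂) :
    Tendsto (fun t => (1 / (-β t)) * (lamE t - lamF t)) atTop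
        (nhds (-((s + 1/6) * cγ + 1/2))) ∧
      -((s + 1/6) * cγ + 1/2) < 0 ∧
      ∀ᶠ t in atTop, lamE t < lamF t := by
  have hE : lamE = fun t => slopeDimTwo s e₁ e₂ e₃ (β t) (α t) := funext hlamE
  have hF : lamF = fun t => slopeDimOne f₂ f₃ (β t) := funext hlamF
  have hlim : Tendsto (fun t => (1 / (-β t)) * (lamE t - lamF t)) atTop
      (𝓝 (-((s + 1/6) * cγ + 1/2))) := by
    have hdiff := (tendsto_slopeDimTwo_div_neg s e₂ e₃ he₁ hβ hc).sub
      (tendsto_slopeDimOne_div_neg f₃ hf₂ hβ)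
    convert hdiff using 2 with t
    · rw [hE, hF, one_div_mul_eq_div, sub_div]
    · ring
  have hneg : -((s + 1/6) * cγ + 1/2) < 0 := by nlinarith
  refine ⟨hlim, hneg, ?_⟩
  filter_upwards [hlim.eventually_lt_const hneg, hβ.eventually_lt_atBot 0] with t hdiff hβt
  exact sub_neg.mp (neg_of_mul_neg_right hdiff (one_div_pos.mpr (neg_pos.mpr hβt)).le)

/-- Along a curve with `β(t) → −∞`, `α(t)²/β(t)² → c_γ ≥ 0`, and for `s > 0`:
if `E ∈ ℝ⁴` has `ch₀(E) = 0`, `ch₁(E) ≠ 0` (dimension 2) and `F ∈ ℝ⁴` has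
`ch₀(F) = ch₁(F) = 0`, `ch₂(F) ≠ 0` (dimension ≤ 1), then, with
`λ_{β,α,s}(v) = −Re Z_{β,α,s}(v)/Im Z_{β,α,s}(v)` (so
`λ(E) = (ch₃^β(E) − (s+1/6)α²ch₁(E))/(ch₂(E) − βch₁(E))` and
`λ(F) = (ch₃(F) − βch₂(F))/ch₂(F)`), one has
`(1/(−β(t)))(λ(E) − λ(F)) → −((s + 1/6)c_γ + 1/2) < 0`; in particular
`λ(F) > λ(E)` for `t` large, so such a subobject `F` destabilizes `E` asymptotically. -/
theorem torsion_subobject_destabilizes_at_minus_infty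
    (β α : ℝ → ℝ) (cγ s : ℝ) (hs : 0 < s)
    (hβ : Tendsto β atTop atBot)
    (hc : Tendsto (fun t => (α t) ^ 2 / (β t) ^ 2) atTop (nhds cγ))
    (hcγ : 0 ≤ cγ)
    (e₁ e₂ e₃ f₂ f₃ : ℝ) (he₁ : e₁ ≠ 0) (hf₂ : f₂ ≠ 0)
    (hImE : ∀ᶠ t in atTop, 0 < e₂ - β t * e₁)
    (hImF : 0 < f₂)
    (lamE lamF : ℝ → ℝ)
    (hlamE : ∀ t, lamE t =
      ((e₃ - β t * e₂ + (1/2) * (β t) ^ 2 * e₁) - (s + 1/6) * (α t) ^ 2 * e₁) /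
        (e₂ - β t * e₁))
    (hlamF : ∀ t, lamF t = (f₃ - β t * f₂) / f₂) :
    Tendsto (fun t => (1 / (-β t)) * (lamE t - lamF t)) atTop
        (nhds (-((s + 1/6) * cγ + 1/2))) ∧
      -((s + 1/6) * cγ + 1/2) < 0 ∧
      ∀ᶠ t in atTop, lamE t < lamF t :=
  torsion_subobject_destabilizes_at_minus_infty_general β α cγ s hs hβ hc hcγ e₁ e₂ e₃ f₂ f₃ he₁ hf₂
    lamE lamF hlamE hlamF
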